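/- Let λ < 0, ω ∈ [λ, 0), q ∈ ℝ \ {0}, and 0 < η ≤ -ω/q². Then for all t ≥ 0, 1 - 2η q² (1 - exp(2tλ))/(-2λ) ≥ exp(2ωt). -/

import Mathlib

/-! With `r = ω / λ ∈ [0, 1]` we have `2ωt = r · 2tλ`, so convexity of `exp` on the segment
`[2tλ, 0]` gives `exp (2ωt) ≤ 1 - r (1 - exp (2tλ))`. On the other hand `η q² ≤ -ω` says exactly
that the subtracted term `2ηq² (1 - exp (2tλ)) / (-2λ)` is at most `r (1 - exp (2tλ))`. -/

open Real

theorem exp_mul_le_one_sub_mul_one_sub_exp {r : ℝ} (x : ℝ) (h0 : 0 ≤ r) (h1 : r ≤ 1) :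
    exp (r * x) ≤ 1 - r * (1 - exp x) := by
  have h := convexOn_exp.2 (Set.mem_univ x) (Set.mem_univ 0) h0 (sub_nonneg.2 h1)
    (add_sub_cancel r 1)
  simp only [smul_eq_mul, mul_zero, add_zero, exp_zero, mul_one] at h
  linarith

theorem ou_supermartingale_scalar_inequality_general
    (lam ω q η : ℝ) (hlam : lam < 0) (hω : ω ∈ Set.Ico lam 0)
    (hηq : η ≤ -ω / q ^ 2) :
    ∀ t : ℝ, 0 ≤ t →
      1 - 2 * η * q ^ 2 * (1 - Real.exp (2 * t * lam)) / (-2 * lam)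
        ≥ Real.exp (2 * ω * t) := by
  intro t ht
  obtain ⟨hlam_le, hω_neg⟩ := hω
  have hr0 : 0 ≤ ω / lam := div_nonneg_of_nonpos hω_neg.le hlam.le
  have hr1 : ω / lam ≤ 1 := (div_le_one_of_neg hlam).2 hlam_le
  have hdecay : 0 ≤ 1 - exp (2 * t * lam) := sub_nonneg.2 (exp_le_one_iff.2 (by nlinarith))
  have hηq' : η * q ^ 2 ≤ -ω := mul_le_of_le_div₀ (by linarith) (sq_nonneg q) hηq
  have hdrift : 2 * η * q ^ 2 * (1 - exp (2 * t * lam)) / (-2 * lam)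
      ≤ ω / lam * (1 - exp (2 * t * lam)) := by
    rw [div_le_iff₀ (by linarith),
      show ω / lam * (1 - exp (2 * t * lam)) * (-2 * lam) = 2 * -ω * (1 - exp (2 * t * lam)) by
        field_simp [hlam.ne]]
    linarith [mul_le_mul_of_nonneg_right hηq' hdecay]
  calc exp (2 * ω * t) = exp (ω / lam * (2 * t * lam)) := by congr 1; field_simp [hlam.ne]
    _ ≤ 1 - ω / lam * (1 - exp (2 * t * lam)) := exp_mul_le_one_sub_mul_one_sub_exp _ hr0 hr1
    _ ≤ _ := by linarith

theorem ou_supermartingale_scalar_inequality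
    (lam ω q η : ℝ) (hlam : lam < 0) (hω : ω ∈ Set.Ico lam 0)
    (hq : q ≠ 0) (hη : 0 < η) (hηq : η ≤ -ω / q ^ 2) :
    ∀ t : ℝ, 0 ≤ t →
      1 - 2 * η * q ^ 2 * (1 - Real.exp (2 * t * lam)) / (-2 * lam)
        ≥ Real.exp (2 * ω * t) :=
  ou_supermartingale_scalar_inequality_general lam ω q η hlam hω hηq
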